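/- Let H be a real Hilbert space, K ⊆ H closed, r-prox-regular for r > 0, p₀ ∈ K_r with x̄ = proj_K(p₀). If the indicator function δ_K is strongly twice epi-differentiable at x̄ for p₀ − x̄, then the function j := (1/2)‖·‖² + δ_K is strongly twice epi-differentiable at x̄ for p₀, and the second subderivatives satisfy Q_j^{x̄,p₀}(z) = ‖z‖² + Q_{δ_K}^{x̄, p₀−x̄}(z) for all z ∈ H. -/
import Mathlib


open Filter Topology
open scoped RealInnerProductSpace Classical

variable {H : Type*} [NormedAddCommGroup H] [InnerProductSpace ℝ H] [CompleteSpace H]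

/-- Second-order difference quotient of `j` at `x` for `g` with step `t` and direction `w`. -/
noncomputable def secondQuotH (j : H → EReal) (x g : H) (t : ℝ) (w : H) : EReal :=
  ((2 / t ^ 2 : ℝ) : EReal) * (j (x + t • w) - j x - ((t * ⟪g, w⟫ : ℝ) : EReal))

/-- Weak convergence of a sequence in the Hilbert space `H`. -/
def WeakTendstoH (z : ℕ → H) (z₀ : H) : Prop :=
  ∀ w : H, Tendsto (fun n => ⟪z n, w⟫) atTop (nhds ⟪z₀, w⟫)

/-- The weak second subderivative of `j` at `x` for `g`. -/
noncomputable def QsubH (j : H → EReal) (x g z : H) : EReal :=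
  sInf { L | ∃ (t : ℕ → ℝ) (zs : ℕ → H),
      (∀ n, 0 < t n) ∧ Tendsto t atTop (nhds 0) ∧ WeakTendstoH zs z ∧
      L = Filter.liminf (fun n => secondQuotH j x g (t n) (zs n)) atTop }

/-- The indicator function of a set, with values in `EReal`. -/
noncomputable def indicatorE (K : Set H) : H → EReal := fun y => if y ∈ K then 0 else ⊤

/-- The tangent cone `T_K(x) = cl(ℝ⁺ (K - x))`. -/
def tangentConeH (K : Set H) (x : H) : Set H :=
  closure { z : H | ∃ c : ℝ, 0 ≤ c ∧ ∃ k ∈ K, z = c • (k - x) }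

/-- The second-order tangent set `T²_K(x, z)`. -/
def secondTangentH (K : Set H) (x z : H) : Set H :=
  { r : H | Tendsto (fun t : ℝ => Metric.infDist (x + t • z + (t ^ 2 / 2) • r) K / t ^ 2)
      (nhdsWithin 0 (Set.Ioi 0)) (nhds 0) }

/-- The proximal normal cone condition: `v ∈ N^P_K(x̄)`. -/
def ProxNormal (K : Set H) (xb v : H) : Prop :=
  ∃ l : ℝ, 0 ≤ l ∧ ∃ y : H, (xb ∈ K ∧ ∀ k ∈ K, ‖xb - y‖ ≤ ‖k - y‖) ∧ v = l • (y - xb)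

/-- `K` is `r`-prox-regular. -/
def ProxRegular (r : ℝ) (K : Set H) : Prop :=
  ∀ xb ∈ K, ∀ x ∈ K, ∀ v : H, ProxNormal K xb v →
    r * ⟪v, x - xb⟫ ≤ (1 / 2) * ‖v‖ * ‖x - xb‖ ^ 2

/-- Strong second-order epi-differentiability of `j` at `x` for `g`. -/
def StrongTwiceEpiH (j : H → EReal) (x g : H) : Prop :=
  ∀ z : H, ∀ t : ℕ → ℝ, (∀ n, 0 < t n) → Tendsto t atTop (nhds 0) →
    ∃ zs : ℕ → H, Tendsto zs atTop (nhds z) ∧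
      Tendsto (fun n => secondQuotH j x g (t n) (zs n)) atTop (nhds (QsubH j x g z))

/-- pointwise decomposition of the second quotient -/
lemma quot_decomp_aux {K : Set H} {xb : H} (hxb : xb ∈ K) {t : ℝ} (ht : 0 < t) (p₀ w : H) :
    secondQuotH (fun y : H => (((1 : ℝ) / 2 * ‖y‖ ^ 2 : ℝ) : EReal) + indicatorE K y) xb p₀ t w
      = ((‖w‖ ^ 2 : ℝ) : EReal) + secondQuotH (indicatorE K) xb (p₀ - xb) t w := by
  have ht' : t ≠ 0 := ne_of_gt ht
  have hnorm : ‖xb + t • w‖ ^ 2 = ‖xb‖ ^ 2 + 2 * (t * ⟪xb, w⟫) + t ^ 2 * ‖w‖ ^ 2 := by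
    rw [@norm_add_sq_real, real_inner_smul_right, norm_smul]
    simp [mul_pow, sq_abs]
  by_cases hmem : xb + t • w ∈ K
  · simp only [secondQuotH, indicatorE, if_pos hxb, if_pos hmem, add_zero]
    have key : (2/t^2) * ((1:ℝ)/2*‖xb + t•w‖^2 - (1:ℝ)/2*‖xb‖^2 - t*⟪p₀,w⟫)
        = ‖w‖^2 + (2/t^2) * (-(t*⟪p₀-xb,w⟫)) := by
      rw [hnorm, inner_sub_left]; field_simp; ring
    have ez : ((0:EReal) - 0 - ((t*⟪p₀-xb,w⟫ : ℝ) : EReal)) = ((-(t*⟪p₀-xb,w⟫) : ℝ) : EReal) := by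
      simp
    rw [ez]
    exact_mod_cast key
  · simp only [secondQuotH, indicatorE, if_pos hxb, if_neg hmem, add_zero]
    have h2 : (0:ℝ) < 2 / t^2 := by positivity
    have hz : (⊤:EReal) - 0 = ⊤ := by
      rw [sub_eq_add_neg, neg_zero, add_zero]
    rw [EReal.coe_add_top, EReal.top_sub_coe, EReal.top_sub_coe, hz, EReal.top_sub_coe,
      EReal.coe_mul_top_of_pos h2, EReal.coe_add_top]

/-- liminf lower bound for a sum of a nonnegative real part and an EReal part. -/
lemma liminf_add_ge_aux {a : ℕ → ℝ} {b : ℕ → EReal} {A : ℝ} {B : EReal}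
    (ha0 : ∀ n, 0 ≤ a n)
    (hA : ∀ ε : ℝ, 0 < ε → ∀ᶠ n in atTop, A - ε < a n)
    (hB : B ≤ liminf b atTop) :
    (A : EReal) + B ≤ liminf (fun n => (a n : EReal) + b n) atTop := by
  induction B with
  | bot => simp
  | top =>
    have hb : liminf b atTop = ⊤ := top_le_iff.mp hB
    have h1 : liminf b atTop ≤ liminf (fun n => (a n : EReal) + b n) atTop := by
      refine liminf_le_liminf (Eventually.of_forall fun n => ?_)
      exact le_add_of_nonneg_left (by exact_mod_cast ha0 n)
    rw [hb] at h1
    calc (A : EReal) + ⊤ ≤ ⊤ := le_top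
    _ ≤ _ := h1
  | coe q =>
    by_contra hcon
    push_neg at hcon
    obtain ⟨c, hc1, hc2⟩ := EReal.exists_between_coe_real hcon
    set ε : ℝ := (A + q - c) / 2 with hε
    have hεpos : 0 < ε := by
      have : (c : EReal) < ((A + q : ℝ) : EReal) := by push_cast; exact hc2
      have := EReal.coe_lt_coe_iff.mp this
      simp only [hε]; linarith
    have h1 : ∀ᶠ n in atTop, A - ε < a n := hA ε hεpos
    have h2 : ∀ᶠ n in atTop, ((q - ε : ℝ) : EReal) < b n := by
      refine eventually_lt_of_lt_liminf (lt_of_lt_of_le ?_ hB)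
      exact_mod_cast sub_lt_self q hεpos
    have h3 : ∀ᶠ n in atTop, (c : EReal) ≤ (a n : EReal) + b n := by
      filter_upwards [h1, h2] with n hn1 hn2
      have : ((A - ε : ℝ) : EReal) + ((q - ε : ℝ) : EReal) < (a n : EReal) + b n :=
        EReal.add_lt_add (by exact_mod_cast hn1) hn2
      refine le_of_lt (lt_of_le_of_lt (le_of_eq ?_) this)
      norm_cast
      simp only [hε]; ring
    exact absurd (le_liminf_of_le (by isBoundedDefault) h3) (not_le.mpr hc1)

/-- Tendsto of sum where the first part is a convergent real sequence. -/
lemma tendsto_coe_add_aux {a : ℕ → ℝ} {A : ℝ} (ha : Tendsto a atTop (nhds A))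
    {b : ℕ → EReal} {B : EReal} (hb : Tendsto b atTop (nhds B)) :
    Tendsto (fun n => (a n : EReal) + b n) atTop (nhds ((A : EReal) + B)) := by
  have hca : Tendsto (fun n => (a n : EReal)) atTop (nhds (A : EReal)) :=
    (continuous_coe_real_ereal.tendsto A).comp ha
  exact (EReal.continuousAt_add (Or.inl (EReal.coe_ne_top A))
    (Or.inl (EReal.coe_ne_bot A))).tendsto.comp (hca.prodMk_nhds hb)


/-- if the indicator function of an `r`-prox-regular set `K` is strongly twice
epi-differentiable at `x̄ = proj_K(p₀)` for `p₀ − x̄`, then `j = ½‖·‖² + δ_K` is strongly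
twice epi-differentiable at `x̄` for `p₀`, with
`Q_j^{x̄,p₀}(z) = ‖z‖² + Q_{δ_K}^{x̄,p₀−x̄}(z)` for all `z`. -/
theorem strongTwiceEpi_half_norm_sq_add_indicator (K : Set H) (hKcl : IsClosed K)
    (hKne : K.Nonempty) (r : ℝ) (hr : 0 < r) (hreg : ProxRegular r K)
    (p₀ : H) (hp₀ : ∃ x ∈ K, ‖x - p₀‖ < r)
    (xb : H) (hxb : xb ∈ K) (hproj : ∀ k ∈ K, ‖xb - p₀‖ ≤ ‖k - p₀‖)
    (hepi : StrongTwiceEpiH (indicatorE K) xb (p₀ - xb)) :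
    StrongTwiceEpiH (fun y : H => (((1 : ℝ) / 2 * ‖y‖ ^ 2 : ℝ) : EReal) + indicatorE K y)
        xb p₀ ∧
    ∀ z : H,
      QsubH (fun y : H => (((1 : ℝ) / 2 * ‖y‖ ^ 2 : ℝ) : EReal) + indicatorE K y) xb p₀ z =
        ((‖z‖ ^ 2 : ℝ) : EReal) + QsubH (indicatorE K) xb (p₀ - xb) z := by
  set J : H → EReal := fun y : H => (((1 : ℝ) / 2 * ‖y‖ ^ 2 : ℝ) : EReal) + indicatorE K y
    with hJ
  have hquot : ∀ (t : ℝ), 0 < t → ∀ w : H, secondQuotH J xb p₀ t w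
      = ((‖w‖ ^ 2 : ℝ) : EReal) + secondQuotH (indicatorE K) xb (p₀ - xb) t w :=
    fun t ht w => quot_decomp_aux hxb ht p₀ w
  have hnsq : ∀ (zs : ℕ → H) (z : H), Tendsto zs atTop (nhds z) →
      Tendsto (fun n => ‖zs n‖ ^ 2) atTop (nhds (‖z‖ ^ 2)) := by
    intro zs z hzs
    exact ((continuous_norm.pow 2).tendsto z).comp hzs
  have hQ : ∀ z : H, QsubH J xb p₀ z =
      ((‖z‖ ^ 2 : ℝ) : EReal) + QsubH (indicatorE K) xb (p₀ - xb) z := by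
    intro z
    refine le_antisymm ?_ ?_
    · set t : ℕ → ℝ := fun n => 1 / ((n : ℝ) + 1) with htdef
      have htpos : ∀ n, 0 < t n := fun n => by positivity
      have ht0 : Tendsto t atTop (nhds 0) := tendsto_one_div_add_atTop_nhds_zero_nat
      obtain ⟨zs, hzs, hconv⟩ := hepi z t htpos ht0
      have hw : WeakTendstoH zs z := fun w =>
        ((continuous_id.inner (continuous_const : Continuous fun _ : H => w)).tendsto z).comp hzs
      have hsum := tendsto_coe_add_aux (hnsq zs z hzs) hconv
      have heq : (fun n => secondQuotH J xb p₀ (t n) (zs n))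
          = fun n => ((‖zs n‖ ^ 2 : ℝ) : EReal)
              + secondQuotH (indicatorE K) xb (p₀ - xb) (t n) (zs n) :=
        funext fun n => hquot (t n) (htpos n) (zs n)
      refine sInf_le ⟨t, zs, htpos, ht0, hw, ?_⟩
      rw [heq]
      exact hsum.liminf_eq.symm
    · refine le_sInf ?_
      rintro L ⟨t, zs, htpos, ht0, hw, rfl⟩
      have heq : (fun n => secondQuotH J xb p₀ (t n) (zs n))
          = fun n => ((‖zs n‖ ^ 2 : ℝ) : EReal)
              + secondQuotH (indicatorE K) xb (p₀ - xb) (t n) (zs n) :=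
        funext fun n => hquot (t n) (htpos n) (zs n)
      rw [heq]
      have hB : QsubH (indicatorE K) xb (p₀ - xb) z ≤ liminf
          (fun n => secondQuotH (indicatorE K) xb (p₀ - xb) (t n) (zs n)) atTop :=
        sInf_le ⟨t, zs, htpos, ht0, hw, rfl⟩
      refine liminf_add_ge_aux (fun n => sq_nonneg _) ?_ hB
      intro ε hε
      have h2 : Tendsto (fun n => 2 * ⟪zs n, z⟫ - ‖z‖ ^ 2) atTop (nhds (‖z‖ ^ 2)) := by
        have h2a := ((hw z).const_mul (2 : ℝ)).sub_const (‖z‖ ^ 2)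
        have : 2 * ⟪z, z⟫ - ‖z‖ ^ 2 = ‖z‖ ^ 2 := by
          rw [real_inner_self_eq_norm_sq]; ring
        rwa [this] at h2a
      have h3 := h2.eventually (eventually_gt_nhds (show ‖z‖ ^ 2 - ε < ‖z‖ ^ 2 by linarith))
      filter_upwards [h3] with n hn
      have h4 : 0 ≤ ‖zs n - z‖ ^ 2 := sq_nonneg _
      rw [@norm_sub_sq_real] at h4
      linarith
  refine ⟨?_, hQ⟩
  intro z t htpos ht0
  obtain ⟨zs, hzs, hconv⟩ := hepi z t htpos ht0
  refine ⟨zs, hzs, ?_⟩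
  have heq : (fun n => secondQuotH J xb p₀ (t n) (zs n))
      = fun n => ((‖zs n‖ ^ 2 : ℝ) : EReal)
          + secondQuotH (indicatorE K) xb (p₀ - xb) (t n) (zs n) :=
    funext fun n => hquot (t n) (htpos n) (zs n)
  rw [heq, hQ z]
  exact tendsto_coe_add_aux (hnsq zs z hzs) hconv
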